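/- In the graph construction described (with positive integers s_1, …, s_T summing to 2B, B > 2, and s_v < B for every v), an EFX orientation exists if and only if there exists a subset I ⊆ {1, …, T} with Σ_{v∈I} s_v = B. -/
import Mathlib


/-- Agents (vertices) of the construction of Theorem 4 (graph instance): the two special
agents `I` and `J`, the middle agents `x v` for `v ∈ {1,…,T}`, and the gadget agents
`X h k` for `h ∈ {1,2}` (indexed by `Fin 2`) and `k ∈ {1,2,3,4}` (indexed by `Fin 4`). -/
inductive Agent (T : ℕ) where
  | I : Agent T
  | J : Agent T
  | x : Fin T → Agent T
  | X : Fin 2 → Fin 4 → Agent T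
deriving DecidableEq

/-- Items (edges) of the construction: `ix v = {i, x_v}` and `jx v = {j, x_v}` (both of
weight `s v`), the six clique edges `g h e` of each gadget `h` (indexed by `e : Fin 6`),
and the connecting edges `iX = {i, X_{1,1}}` and `jX = {j, X_{2,1}}` of weight `B`. -/
inductive Item (T : ℕ) where
  | ix : Fin T → Item T
  | jx : Fin T → Item T
  | g : Fin 2 → Fin 6 → Item T
  | iX : Item T
  | jX : Item T
deriving DecidableEq

/-- The pair of gadget-vertex indices joined by the `e`-th clique edge: the six edges of
the clique on `{0,1,2,3}` are `01, 02, 03, 12, 13, 23`. -/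
def cliquePair : Fin 6 → Fin 4 × Fin 4
  | 0 => (0, 1)
  | 1 => (0, 2)
  | 2 => (0, 3)
  | 3 => (1, 2)
  | 4 => (1, 3)
  | 5 => (2, 3)

/-- The two endpoints of each edge of the construction. -/
def endpoints {T : ℕ} : Item T → Agent T × Agent T
  | .ix v => (.I, .x v)
  | .jx v => (.J, .x v)
  | .g h e => (.X h (cliquePair e).1, .X h (cliquePair e).2)
  | .iX => (.I, .X 0 0)
  | .jX => (.J, .X 1 0)

/-- The weight of each edge: the edges `{i,x_v}` and `{j,x_v}` have weight `s v`; in each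
gadget the edges `{X_{h,1},X_{h,2}}` (index `0`) and `{X_{h,3},X_{h,4}}` (index `5`) have
weight `B` and the four remaining clique edges have weight `1`; the edges `{i,X_{1,1}}`
and `{j,X_{2,1}}` have weight `B`. -/
noncomputable def wt {T : ℕ} (s : Fin T → ℤ) (B : ℤ) : Item T → ℝ
  | .ix v => (s v : ℝ)
  | .jx v => (s v : ℝ)
  | .g _ e => if e = 0 ∨ e = 5 then (B : ℝ) else 1
  | .iX => (B : ℝ)
  | .jX => (B : ℝ)

/-- Additive symmetric valuations: an agent values an edge at its weight if the agent is
one of its endpoints and at `0` otherwise. -/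
noncomputable def val {T : ℕ} (s : Fin T → ℤ) (B : ℤ) (u : Agent T) (a : Item T) : ℝ :=
  if u = (endpoints a).1 ∨ u = (endpoints a).2 then wt s B a else 0

/-- The value of an agent for a bundle of edges. -/
noncomputable def bval {T : ℕ} (s : Fin T → ℤ) (B : ℤ) (u : Agent T)
    (S : Finset (Item T)) : ℝ :=
  ∑ a ∈ S, val s B u a
section AuxEFX

variable {T : ℕ} {s : Fin T → ℤ} {B : ℤ}

lemma wt_nonneg (hpos : ∀ v, 0 < s v) (hB : 0 ≤ B) (a : Item T) :
    0 ≤ wt s B a := by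
  have hB' : (0:ℝ) ≤ (B:ℝ) := by exact_mod_cast hB
  cases a with
  | ix v => have := (hpos v).le; simp only [wt]; exact_mod_cast this
  | jx v => have := (hpos v).le; simp only [wt]; exact_mod_cast this
  | g h e =>
      simp only [wt]; split_ifs
      · exact hB'
      · norm_num
  | iX => simp only [wt]; exact hB'
  | jX => simp only [wt]; exact hB'

lemma val_nonneg (hpos : ∀ v, 0 < s v) (hB : 0 ≤ B) (u : Agent T) (a : Item T) :
    0 ≤ val s B u a := by
  unfold val; split_ifs
  · exact wt_nonneg hpos hB a
  · exact le_rfl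

lemma bval_nonneg (hpos : ∀ v, 0 < s v) (hB : 0 ≤ B) (u : Agent T) (S : Finset (Item T)) :
    0 ≤ bval s B u S :=
  Finset.sum_nonneg fun a _ => val_nonneg hpos hB u a

lemma bval_mono (hpos : ∀ v, 0 < s v) (hB : 0 ≤ B) (u : Agent T) {S S' : Finset (Item T)}
    (hS : S ⊆ S') : bval s B u S ≤ bval s B u S' :=
  Finset.sum_le_sum_of_subset_of_nonneg hS fun a _ _ => val_nonneg hpos hB u a

lemma val_le_bval (hpos : ∀ v, 0 < s v) (hB : 0 ≤ B) (u : Agent T) {S : Finset (Item T)}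
    {a : Item T} (ha : a ∈ S) : val s B u a ≤ bval s B u S :=
  Finset.single_le_sum (fun a _ => val_nonneg hpos hB u a) ha

lemma bval_pair (u : Agent T) {a b : Item T} (hne : a ≠ b) :
    bval s B u {a, b} = val s B u a + val s B u b := by
  unfold bval; rw [Finset.sum_pair hne]

lemma bval_triple (u : Agent T) {a b c : Item T} (h1 : a ≠ b) (h2 : a ≠ c) (h3 : b ≠ c) :
    bval s B u {a, b, c} = val s B u a + (val s B u b + val s B u c) := by
  unfold bval
  rw [Finset.sum_insert (by simp [h1, h2]), Finset.sum_pair h3]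

end AuxEFX
section BackAux

variable {T : ℕ}

def exItem {T : ℕ} : Fin 2 → Item T
  | 0 => .iX
  | 1 => .jX

def ownerB {T : ℕ} (I0 : Finset (Fin T)) : Item T → Agent T
  | .ix v => if v ∈ I0 then .I else .x v
  | .jx v => if v ∈ I0 then .x v else .J
  | .g h e => (match e with
    | 0 => .X h 1 | 1 => .X h 0 | 2 => .X h 3 | 3 => .X h 1 | 4 => .X h 1 | 5 => .X h 2)
  | .iX => .X 0 0
  | .jX => .X 1 0

def piB {T : ℕ} (I0 : Finset (Fin T)) : Agent T → Finset (Item T)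
  | .I => I0.image .ix
  | .J => I0ᶜ.image .jx
  | .x v => if v ∈ I0 then {.jx v} else {.ix v}
  | .X h k => (match k with
    | 0 => {exItem h, .g h 1}
    | 1 => {.g h 0, .g h 3, .g h 4}
    | 2 => {.g h 5}
    | 3 => {.g h 2})

lemma mem_piB (I0 : Finset (Fin T)) (a : Item T) (u : Agent T) :
    a ∈ piB I0 u ↔ u = ownerB I0 a := by
  cases u <;> cases a <;>
    try (rename_i h k h' e; fin_cases k <;> fin_cases h <;> fin_cases h' <;> fin_cases e <;>
      simp [piB, ownerB, exItem])
  all_goals try (rename_i h k; fin_cases k <;> fin_cases h <;> simp [piB, ownerB, exItem])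
  all_goals try (rename_i h k v; fin_cases k <;> fin_cases h <;> simp [piB, ownerB, exItem])
  all_goals try simp [piB, ownerB, exItem]
  all_goals try (split_ifs <;> simp_all [eq_comm])
  all_goals (rintro rfl; contradiction)

lemma ownerB_endpoints (I0 : Finset (Fin T)) (a : Item T) :
    ownerB I0 a = (endpoints a).1 ∨ ownerB I0 a = (endpoints a).2 := by
  cases a with
  | ix v => simp only [ownerB, endpoints]; split_ifs <;> simp
  | jx v => simp only [ownerB, endpoints]; split_ifs <;> simp
  | g h e => fin_cases e <;> simp [ownerB, endpoints, cliquePair]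
  | iX => right; rfl
  | jX => right; rfl

variable {s : Fin T → ℤ} {B : ℤ} {I0 : Finset (Fin T)}

lemma bval_image_ix (u : Agent T) (I1 : Finset (Fin T)) :
    bval s B u (I1.image Item.ix) = ∑ v ∈ I1, val s B u (Item.ix v) := by
  unfold bval
  exact Finset.sum_image (by intro x _ y _ hxy; exact Item.ix.inj hxy)

lemma bval_image_jx (u : Agent T) (I1 : Finset (Fin T)) :
    bval s B u (I1.image Item.jx) = ∑ v ∈ I1, val s B u (Item.jx v) := by
  unfold bval
  exact Finset.sum_image (by intro x _ y _ hxy; exact Item.jx.inj hxy)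

lemma bvalI (hI0 : ∑ v ∈ I0, s v = B) :
    bval s B Agent.I (piB I0 Agent.I) = (B:ℝ) := by
  show bval s B Agent.I (I0.image Item.ix) = (B:ℝ)
  rw [bval_image_ix]
  have : ∀ v ∈ I0, val s B Agent.I (Item.ix v) = (s v : ℝ) := by
    intro v _; simp [val, endpoints, wt]
  rw [Finset.sum_congr rfl this, ← Int.cast_sum, hI0]

lemma bvalJ (hsum : ∑ v : Fin T, s v = 2*B) (hI0 : ∑ v ∈ I0, s v = B) :
    bval s B Agent.J (piB I0 Agent.J) = (B:ℝ) := by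
  show bval s B Agent.J (I0ᶜ.image Item.jx) = (B:ℝ)
  rw [bval_image_jx]
  have h1 : ∀ v ∈ I0ᶜ, val s B Agent.J (Item.jx v) = (s v : ℝ) := by
    intro v _; simp [val, endpoints, wt]
  have h2 : ∑ v ∈ I0ᶜ, s v = B := by
    have := Finset.sum_add_sum_compl I0 s
    omega
  rw [Finset.sum_congr rfl h1, ← Int.cast_sum, h2]

lemma bvalx (v : Fin T) : bval s B (Agent.x v) (piB I0 (Agent.x v)) = (s v : ℝ) := by
  show bval s B (Agent.x v) (if v ∈ I0 then {Item.jx v} else {Item.ix v}) = (s v : ℝ)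
  split_ifs <;> simp [bval, val, endpoints, wt]

end BackAux
section KeyB

variable {T : ℕ} {s : Fin T → ℤ} {B : ℤ} {I0 : Finset (Fin T)}

lemma keyB (hpos : ∀ v, 0 < s v) (hsum : ∑ v : Fin T, s v = 2*B) (hB : 2 < B)
    (hI0 : ∑ v ∈ I0, s v = B) (u w : Agent T) :
    (piB I0 w).card ≤ 1 ∨ bval s B u (piB I0 w) ≤ bval s B u (piB I0 u) := by
  have hB0 : (0:ℤ) ≤ B := by omega
  have hBr : (2:ℝ) < (B:ℝ) := by exact_mod_cast hB
  rcases eq_or_ne u w with rfl | hne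
  · exact Or.inr le_rfl
  cases w with
  | x v =>
      left
      by_cases hv : v ∈ I0 <;> simp [piB, hv]
  | I =>
      right
      rw [show piB I0 Agent.I = I0.image Item.ix from rfl, bval_image_ix]
      cases u with
      | I => exact absurd rfl hne
      | J =>
          rw [Finset.sum_eq_zero (by intro v _; simp [val, endpoints]),
            bvalJ hsum hI0]
          linarith
      | x v =>
          have hval : ∀ v' ∈ I0, val s B (Agent.x v) (Item.ix v') =
              if v' = v then (s v' : ℝ) else 0 := by
            intro v' _; simp [val, endpoints, wt, eq_comm]
          rw [Finset.sum_congr rfl hval, Finset.sum_ite_eq', bvalx]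
          have : (0:ℝ) < (s v : ℝ) := by exact_mod_cast hpos v
          split_ifs <;> linarith
      | X h k =>
          rw [Finset.sum_eq_zero (by intro v _; simp [val, endpoints])]
          exact bval_nonneg hpos hB0 _ _
  | J =>
      right
      rw [show piB I0 Agent.J = I0ᶜ.image Item.jx from rfl, bval_image_jx]
      cases u with
      | J => exact absurd rfl hne
      | I =>
          rw [Finset.sum_eq_zero (by intro v _; simp [val, endpoints]),
            bvalI hI0]
          linarith
      | x v =>
          have hval : ∀ v' ∈ I0ᶜ, val s B (Agent.x v) (Item.jx v') =
              if v' = v then (s v' : ℝ) else 0 := by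
            intro v' _; simp [val, endpoints, wt, eq_comm]
          rw [Finset.sum_congr rfl hval, Finset.sum_ite_eq', bvalx]
          have : (0:ℝ) < (s v : ℝ) := by exact_mod_cast hpos v
          split_ifs <;> linarith
      | X h k =>
          rw [Finset.sum_eq_zero (by intro v _; simp [val, endpoints])]
          exact bval_nonneg hpos hB0 _ _
  | X h k =>
      have hsx : ∀ v : Fin T, (0:ℝ) < (s v : ℝ) := by
        intro v; exact_mod_cast hpos v
      fin_cases k
      · -- k = 0
        right
        rcases u with _ | _ | v | ⟨h', k'⟩
        · rw [bvalI hI0]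
          fin_cases h <;> simp [piB, exItem, bval, Finset.sum_pair, Finset.sum_insert, val, endpoints, wt,
              cliquePair] <;> linarith
        · rw [bvalJ hsum hI0]
          fin_cases h <;> simp [piB, exItem, bval, Finset.sum_pair, Finset.sum_insert, val, endpoints, wt,
              cliquePair] <;> linarith
        · rw [bvalx]
          fin_cases h <;> simp [piB, exItem, bval, Finset.sum_pair, Finset.sum_insert, val, endpoints, wt,
              cliquePair] <;>
            first
              | exact (hpos v).le
              | linarith [hsx v]
        · fin_cases h <;> fin_cases h' <;> fin_cases k' <;> simp [piB, exItem, bval, Finset.sum_pair, Finset.sum_insert, val, endpoints, wt,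
              cliquePair] <;> linarith
      · -- k = 1
        right
        rcases u with _ | _ | v | ⟨h', k'⟩
        · rw [bvalI hI0]
          fin_cases h <;> simp [piB, exItem, bval, Finset.sum_pair, Finset.sum_insert, val, endpoints, wt,
              cliquePair] <;> linarith
        · rw [bvalJ hsum hI0]
          fin_cases h <;> simp [piB, exItem, bval, Finset.sum_pair, Finset.sum_insert, val, endpoints, wt,
              cliquePair] <;> linarith
        · rw [bvalx]
          fin_cases h <;> simp [piB, exItem, bval, Finset.sum_pair, Finset.sum_insert, val, endpoints, wt,
              cliquePair] <;>
            first
              | exact (hpos v).le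
              | linarith [hsx v]
        · fin_cases h <;> fin_cases h' <;> fin_cases k' <;> simp [piB, exItem, bval, Finset.sum_pair, Finset.sum_insert, val, endpoints, wt,
              cliquePair] <;> linarith
      · left; simp [piB]
      · left; simp [piB]

end KeyB
section Gadget

variable {T : ℕ} {s : Fin T → ℤ} {B : ℤ}

lemma gadget (hpos : ∀ v, 0 < s v) (hB : 2 < B)
    (π : Agent T → Finset (Item T))
    (hdisj : ∀ u w : Agent T, u ≠ w → Disjoint (π u) (π w))
    (hcov : ∀ a : Item T, ∃ u, a ∈ π u)
    (hown : ∀ u : Agent T, ∀ a ∈ π u, u = (endpoints a).1 ∨ u = (endpoints a).2)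
    (hefx : ∀ u w : Agent T, ∀ a ∈ π w, bval s B u (π u) ≥ bval s B u ((π w).erase a))
    (h : Fin 2) (P : Agent T) (E : Item T)
    (hE : endpoints E = (P, .X h 0)) (hwE : wt s B E = (B:ℝ))
    (hiX : h = 0 → E = Item.iX) (hjX : h = 1 → E = Item.jX)
    (hPne : ∀ h' k, P ≠ Agent.X h' k) :
    E ∈ π (Agent.X h 0) ∧ (B:ℝ) ≤ bval s B P (π P) := by
  have hB0 : (0:ℤ) ≤ B := by omega
  have hBr : (2:ℝ) < (B:ℝ) := by exact_mod_cast hB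
  have hEform : E = Item.iX ∨ E = Item.jX := by
    fin_cases h
    · exact Or.inl (hiX rfl)
    · exact Or.inr (hjX rfl)
  have hEg : ∀ (h' : Fin 2) (e : Fin 6), E ≠ Item.g h' e := by
    rcases hEform with rfl | rfl <;> simp
  --每 item is owned by one of its endpoints
  have hoc : ∀ a : Item T, a ∈ π (endpoints a).1 ∨ a ∈ π (endpoints a).2 := by
    intro a
    obtain ⟨u, hu⟩ := hcov a
    rcases hown u a hu with h1 | h1
    · exact Or.inl (h1 ▸ hu)
    · exact Or.inr (h1 ▸ hu)
  have hnb : ∀ (u w : Agent T) (a : Item T), u ≠ w → a ∈ π u → a ∉ π w := by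
    intro u w a hne hu hw
    exact Finset.disjoint_left.mp (hdisj u w hne) hu hw
  -- incidence subsets
  have suba : π (.X h 0) ⊆ {Item.g h 0, Item.g h 1, Item.g h 2, E} := by
    intro a ha
    have h1 := hown _ a ha
    cases a with
    | ix v => simp [endpoints] at h1
    | jx v => simp [endpoints] at h1
    | g h' e =>
        fin_cases e <;> simp [endpoints, cliquePair] at h1 <;> simp_all [eq_comm]
    | iX =>
        simp [endpoints] at h1
        rw [hiX h1]; simp
    | jX =>
        simp [endpoints] at h1
        rw [hjX h1]; simp
  have subb : π (.X h 1) ⊆ {Item.g h 0, Item.g h 3, Item.g h 4} := by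
    intro a ha
    have h1 := hown _ a ha
    cases a with
    | ix v => simp [endpoints] at h1
    | jx v => simp [endpoints] at h1
    | g h' e =>
        fin_cases e <;> simp [endpoints, cliquePair] at h1 <;> simp_all [eq_comm]
    | iX => simp [endpoints] at h1
    | jX => simp [endpoints] at h1
  have subc : π (.X h 2) ⊆ {Item.g h 1, Item.g h 3, Item.g h 5} := by
    intro a ha
    have h1 := hown _ a ha
    cases a with
    | ix v => simp [endpoints] at h1
    | jx v => simp [endpoints] at h1
    | g h' e =>
        fin_cases e <;> simp [endpoints, cliquePair] at h1 <;> simp_all [eq_comm]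
    | iX => simp [endpoints] at h1
    | jX => simp [endpoints] at h1
  have subd : π (.X h 3) ⊆ {Item.g h 2, Item.g h 4, Item.g h 5} := by
    intro a ha
    have h1 := hown _ a ha
    cases a with
    | ix v => simp [endpoints] at h1
    | jx v => simp [endpoints] at h1
    | g h' e =>
        fin_cases e <;> simp [endpoints, cliquePair] at h1 <;> simp_all [eq_comm]
    | iX => simp [endpoints] at h1
    | jX => simp [endpoints] at h1
  -- bound on a bundle contained in two unit items
  have two_bound : ∀ (u : Agent T) (a1 a2 : Item T), π u ⊆ {a1, a2} →
      val s B u a1 ≤ 1 → val s B u a2 ≤ 1 → bval s B u (π u) ≤ 2 := by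
    intro u a1 a2 hsub h1 h2
    have hb : bval s B u (π u) ≤ bval s B u {a1, a2} := bval_mono hpos hB0 u hsub
    rcases eq_or_ne a1 a2 with rfl | hne
    · have : bval s B u {a1, a1} = val s B u a1 := by simp [bval]
      rw [this] at hb; linarith
    · rw [bval_pair u hne] at hb; linarith
  -- envy contradiction pattern
  have envyB : ∀ (u' w : Agent T) (y heavy : Item T), y ∈ π w → heavy ∈ π w →
      heavy ≠ y → (B:ℝ) ≤ val s B u' heavy → bval s B u' (π u') ≤ 2 → False := by
    intro u' w y heavy hy hh hne hv hub
    have h1 := hefx u' w y hy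
    have h2 : val s B u' heavy ≤ bval s B u' ((π w).erase y) :=
      val_le_bval hpos hB0 u' (Finset.mem_erase_of_ne_of_mem hne hh)
    linarith
  -- value computations
  have vd5 : val s B (Agent.X h 3) (Item.g h 5) = (B:ℝ) := by
    simp [val, endpoints, cliquePair, wt]
  have vc5 : val s B (Agent.X h 2) (Item.g h 5) = (B:ℝ) := by
    simp [val, endpoints, cliquePair, wt]
  have vb0 : val s B (Agent.X h 1) (Item.g h 0) = (B:ℝ) := by
    simp [val, endpoints, cliquePair, wt]
  have va0 : val s B (Agent.X h 0) (Item.g h 0) = (B:ℝ) := by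
    simp [val, endpoints, cliquePair, wt]
  have unit : ∀ (u : Agent T) (h' : Fin 2) (e : Fin 6), e ≠ 0 → e ≠ 5 →
      val s B u (Item.g h' e) ≤ 1 := by
    intro u h' e he0 he5
    unfold val
    split_ifs
    · simp [wt, he0, he5]
    · norm_num
  -- cd exclusivity
  have cdc : Item.g h 5 ∈ π (.X h 2) → π (.X h 2) = {Item.g h 5} := by
    intro hmem
    refine Finset.Subset.antisymm ?_ (Finset.singleton_subset_iff.mpr hmem)
    intro y hy
    rw [Finset.mem_singleton]
    by_contra hne
    have hd5 : Item.g h 5 ∉ π (.X h 3) := hnb _ _ _ (by simp) hmem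
    have hsubd2 : π (.X h 3) ⊆ {Item.g h 2, Item.g h 4} := by
      intro z hz
      have hz' := subd hz
      simp only [Finset.mem_insert, Finset.mem_singleton] at hz' ⊢
      rcases hz' with h1|h1|h1
      · exact Or.inl h1
      · exact Or.inr h1
      · exact absurd (h1 ▸ hz) hd5
    exact envyB (.X h 3) (.X h 2) y (Item.g h 5) hy hmem (fun hh => hne hh.symm)
      (le_of_eq vd5.symm)
      (two_bound _ _ _ hsubd2 (unit _ _ _ (by simp) (by simp))
        (unit _ _ _ (by simp) (by simp)))
  have cdd : Item.g h 5 ∈ π (.X h 3) → π (.X h 3) = {Item.g h 5} := by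
    intro hmem
    refine Finset.Subset.antisymm ?_ (Finset.singleton_subset_iff.mpr hmem)
    intro y hy
    rw [Finset.mem_singleton]
    by_contra hne
    have hc5 : Item.g h 5 ∉ π (.X h 2) := hnb _ _ _ (by simp) hmem
    have hsubc2 : π (.X h 2) ⊆ {Item.g h 1, Item.g h 3} := by
      intro z hz
      have hz' := subc hz
      simp only [Finset.mem_insert, Finset.mem_singleton] at hz' ⊢
      rcases hz' with h1|h1|h1
      · exact Or.inl h1
      · exact Or.inr h1
      · exact absurd (h1 ▸ hz) hc5
    exact envyB (.X h 2) (.X h 3) y (Item.g h 5) hy hmem (fun hh => hne hh.symm)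
      (le_of_eq vc5.symm)
      (two_bound _ _ _ hsubc2 (unit _ _ _ (by simp) (by simp))
        (unit _ _ _ (by simp) (by simp)))
  -- the heavy edge {a,b} cannot be owned by a
  have aba : Item.g h 0 ∈ π (.X h 0) → π (.X h 0) = {Item.g h 0} := by
    intro hmem
    refine Finset.Subset.antisymm ?_ (Finset.singleton_subset_iff.mpr hmem)
    intro y hy
    rw [Finset.mem_singleton]
    by_contra hne
    have hb0 : Item.g h 0 ∉ π (.X h 1) := hnb _ _ _ (by simp) hmem
    have hsubb2 : π (.X h 1) ⊆ {Item.g h 3, Item.g h 4} := by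
      intro z hz
      have hz' := subb hz
      simp only [Finset.mem_insert, Finset.mem_singleton] at hz' ⊢
      rcases hz' with h1|h1|h1
      · exact absurd (h1 ▸ hz) hb0
      · exact Or.inl h1
      · exact Or.inr h1
    exact envyB (.X h 1) (.X h 0) y (Item.g h 0) hy hmem (fun hh => hne hh.symm)
      (le_of_eq vb0.symm)
      (two_bound _ _ _ hsubb2 (unit _ _ _ (by simp) (by simp))
        (unit _ _ _ (by simp) (by simp)))
  -- hence b owns {a,b}
  have hoc0 : Item.g h 0 ∈ π (.X h 0) ∨ Item.g h 0 ∈ π (.X h 1) := hoc _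
  have hoc1 : Item.g h 1 ∈ π (.X h 0) ∨ Item.g h 1 ∈ π (.X h 2) := hoc _
  have hoc2 : Item.g h 2 ∈ π (.X h 0) ∨ Item.g h 2 ∈ π (.X h 3) := hoc _
  have hoc3 : Item.g h 3 ∈ π (.X h 1) ∨ Item.g h 3 ∈ π (.X h 2) := hoc _
  have hoc4 : Item.g h 4 ∈ π (.X h 1) ∨ Item.g h 4 ∈ π (.X h 3) := hoc _
  have hoc5 : Item.g h 5 ∈ π (.X h 2) ∨ Item.g h 5 ∈ π (.X h 3) := hoc _
  have hab : Item.g h 0 ∈ π (.X h 1) := by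
    rcases hoc0 with hmem | hmem
    · exfalso
      have ha0 := aba hmem
      have h1mem : Item.g h 1 ∈ π (.X h 2) := by
        rcases hoc1 with hx | hx
        · rw [ha0] at hx; simp at hx
        · exact hx
      have h2mem : Item.g h 2 ∈ π (.X h 3) := by
        rcases hoc2 with hx | hx
        · rw [ha0] at hx; simp at hx
        · exact hx
      rcases hoc5 with h5 | h5
      · have hq := cdc h5; rw [hq] at h1mem; simp at h1mem
      · have hq := cdd h5; rw [hq] at h2mem; simp at h2mem
    · exact hmem
  -- b owns a second item
  have hbextra : Item.g h 3 ∈ π (.X h 1) ∨ Item.g h 4 ∈ π (.X h 1) := by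
    by_contra hcon
    push_neg at hcon
    obtain ⟨h3n, h4n⟩ := hcon
    have h3c : Item.g h 3 ∈ π (.X h 2) := hoc3.resolve_left h3n
    have h4d : Item.g h 4 ∈ π (.X h 3) := hoc4.resolve_left h4n
    rcases hoc5 with h5 | h5
    · have hq := cdc h5; rw [hq] at h3c; simp at h3c
    · have hq := cdd h5; rw [hq] at h4d; simp at h4d
  obtain ⟨y, hyb, hyne0⟩ : ∃ y ∈ π (.X h 1), y ≠ Item.g h 0 := by
    rcases hbextra with h' | h'
    · exact ⟨_, h', by simp⟩
    · exact ⟨_, h', by simp⟩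
  -- a owns the connecting edge E
  have hEa : E ∈ π (.X h 0) := by
    by_contra hEa
    have h0na : Item.g h 0 ∉ π (.X h 0) := hnb _ _ _ (by simp) hab
    have hsuba2 : π (.X h 0) ⊆ {Item.g h 1, Item.g h 2} := by
      intro z hz
      have hz' := suba hz
      simp only [Finset.mem_insert, Finset.mem_singleton] at hz' ⊢
      rcases hz' with h1|h1|h1|h1
      · exact absurd (h1 ▸ hz) h0na
      · exact Or.inl h1
      · exact Or.inr h1
      · exact absurd (h1 ▸ hz) hEa
    exact envyB (.X h 0) (.X h 1) y (Item.g h 0) hyb hab (fun hh => hyne0 hh.symm)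
      (le_of_eq va0.symm)
      (two_bound _ _ _ hsuba2 (unit _ _ _ (by simp) (by simp))
        (unit _ _ _ (by simp) (by simp)))
  -- a owns a second item besides E
  obtain ⟨y2, hy2a, hy2g⟩ : ∃ y2 ∈ π (.X h 0), y2 = Item.g h 1 ∨ y2 = Item.g h 2 := by
    rcases hoc5 with h5 | h5
    · have hq := cdc h5
      have : Item.g h 1 ∈ π (.X h 0) := by
        rcases hoc1 with hx | hx
        · exact hx
        · rw [hq] at hx; simp at hx
      exact ⟨_, this, Or.inl rfl⟩
    · have hq := cdd h5
      have : Item.g h 2 ∈ π (.X h 0) := by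
        rcases hoc2 with hx | hx
        · exact hx
        · rw [hq] at hx; simp at hx
      exact ⟨_, this, Or.inr rfl⟩
  -- conclude
  have hfin := hefx P (.X h 0) y2 hy2a
  have hEy2 : E ≠ y2 := by
    rcases hy2g with rfl | rfl
    · exact hEg h 1
    · exact hEg h 2
  have hle : val s B P E ≤ bval s B P ((π (.X h 0)).erase y2) :=
    val_le_bval hpos hB0 P (Finset.mem_erase_of_ne_of_mem hEy2 hEa)
  have hvPE : val s B P E = (B:ℝ) := by
    unfold val
    rw [hE, hwE]
    simp
  exact ⟨hEa, by linarith⟩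

end Gadget

/-- For positive integers `s 1, …, s T` summing to `2B`, with `B > 2`
and `s v < B` for every `v`, the constructed graph instance admits an EFX orientation
(an allocation of every edge to one of its endpoints that is envy-free up to any good)
if and only if some subset of the `s v` sums to `B`. -/
theorem efx_orientation_iff_partition
    (T : ℕ) (hT : 0 < T) (s : Fin T → ℤ) (B : ℤ)
    (hpos : ∀ v : Fin T, 0 < s v) (hsum : ∑ v : Fin T, s v = 2 * B)
    (hB : 2 < B) (hlt : ∀ v : Fin T, s v < B) :
    (∃ π : Agent T → Finset (Item T),
        (∀ u w : Agent T, u ≠ w → Disjoint (π u) (π w)) ∧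
        (∀ a : Item T, ∃ u : Agent T, a ∈ π u) ∧
        (∀ u : Agent T, ∀ a ∈ π u, u = (endpoints a).1 ∨ u = (endpoints a).2) ∧
        (∀ u w : Agent T, ∀ a ∈ π w,
          bval s B u (π u) ≥ bval s B u ((π w).erase a))) ↔
      ∃ I : Finset (Fin T), ∑ v ∈ I, s v = B := by
  have hB0 : (0:ℤ) ≤ B := by omega
  have hsum2 : ∑ v : Fin T, s v = 2 * B := hsum
  constructor
  · rintro ⟨π, hdisj, hcov, hown, hefx⟩
    classical
    have g0 := gadget hpos hB π hdisj hcov hown hefx 0 Agent.I Item.iX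
      (by simp [endpoints]) (by simp [wt]) (fun _ => rfl) (by intro hc; simp at hc)
      (by intro h' k; simp)
    have g1 := gadget hpos hB π hdisj hcov hown hefx 1 Agent.J Item.jX
      (by simp [endpoints]) (by simp [wt]) (by intro hc; simp at hc) (fun _ => rfl)
      (by intro h' k; simp)
    obtain ⟨hiXm, hIvalB⟩ := g0
    obtain ⟨hjXm, hJvalB⟩ := g1
    set Iset := Finset.univ.filter (fun v => Item.ix v ∈ π Agent.I) with hIsetdef
    set Jset := Finset.univ.filter (fun v => Item.jx v ∈ π Agent.J) with hJsetdef
    have hiXnI : Item.iX ∉ π Agent.I :=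
      Finset.disjoint_left.mp (hdisj _ _ (by simp)) hiXm
    have hjXnJ : Item.jX ∉ π Agent.J :=
      Finset.disjoint_left.mp (hdisj _ _ (by simp)) hjXm
    have hIchar : π Agent.I = Iset.image Item.ix := by
      ext a
      simp only [hIsetdef, Finset.mem_image, Finset.mem_filter, Finset.mem_univ, true_and]
      constructor
      · intro ha
        have h1 := hown _ a ha
        cases a with
        | ix v => exact ⟨v, ha, rfl⟩
        | jx v => simp [endpoints] at h1
        | g h e => simp [endpoints] at h1
        | iX => exact absurd ha hiXnI
        | jX => simp [endpoints] at h1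
      · rintro ⟨v, hv, rfl⟩
        exact hv
    have hJchar : π Agent.J = Jset.image Item.jx := by
      ext a
      simp only [hJsetdef, Finset.mem_image, Finset.mem_filter, Finset.mem_univ, true_and]
      constructor
      · intro ha
        have h1 := hown _ a ha
        cases a with
        | ix v => simp [endpoints] at h1
        | jx v => exact ⟨v, ha, rfl⟩
        | g h e => simp [endpoints] at h1
        | iX => simp [endpoints] at h1
        | jX => exact absurd ha hjXnJ
      · rintro ⟨v, hv, rfl⟩
        exact hv
    have hIZ : B ≤ ∑ v ∈ Iset, s v := by
      rw [hIchar, bval_image_ix] at hIvalB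
      have heq : ∀ v ∈ Iset, val s B Agent.I (Item.ix v) = (s v : ℝ) := by
        intro v _; simp [val, endpoints, wt]
      rw [Finset.sum_congr rfl heq, ← Int.cast_sum] at hIvalB
      exact_mod_cast hIvalB
    have hJZ : B ≤ ∑ v ∈ Jset, s v := by
      rw [hJchar, bval_image_jx] at hJvalB
      have heq : ∀ v ∈ Jset, val s B Agent.J (Item.jx v) = (s v : ℝ) := by
        intro v _; simp [val, endpoints, wt]
      rw [Finset.sum_congr rfl heq, ← Int.cast_sum] at hJvalB
      exact_mod_cast hJvalB
    have hdisjIJ : Disjoint Iset Jset := by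
      rw [Finset.disjoint_left]
      intro v hvI' hvJ'
      have hvI : Item.ix v ∈ π Agent.I := by
        simpa [hIsetdef] using hvI'
      have hvJ : Item.jx v ∈ π Agent.J := by
        simpa [hJsetdef] using hvJ'
      have hxe : π (Agent.x v) = ∅ := by
        rw [Finset.eq_empty_iff_forall_notMem]
        intro a ha
        have h1 := hown _ a ha
        cases a with
        | ix w =>
            have hvw : v = w := by simpa [endpoints] using h1
            exact Finset.disjoint_left.mp (hdisj (Agent.x v) Agent.I (by simp)) ha
              (hvw ▸ hvI)
        | jx w =>
            have hvw : v = w := by simpa [endpoints] using h1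
            exact Finset.disjoint_left.mp (hdisj (Agent.x v) Agent.J (by simp)) ha
              (hvw ▸ hvJ)
        | g h e => simp [endpoints] at h1
        | iX => simp [endpoints] at h1
        | jX => simp [endpoints] at h1
      have hWex : ∃ w ∈ Iset, w ≠ v := by
        by_contra hcon
        push_neg at hcon
        have hsub : Iset ⊆ {v} := fun w hw => Finset.mem_singleton.mpr (hcon w hw)
        have hle : ∑ w ∈ Iset, s w ≤ ∑ w ∈ ({v} : Finset (Fin T)), s w :=
          Finset.sum_le_sum_of_subset_of_nonneg hsub (fun i _ _ => (hpos i).le)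
        rw [Finset.sum_singleton] at hle
        have := hlt v
        omega
      obtain ⟨w, hwI', hwv⟩ := hWex
      have hwI : Item.ix w ∈ π Agent.I := by
        simpa [hIsetdef] using hwI'
      have hefx1 := hefx (Agent.x v) Agent.I (Item.ix w) hwI
      have hmem : Item.ix v ∈ (π Agent.I).erase (Item.ix w) :=
        Finset.mem_erase_of_ne_of_mem (by simp [Ne.symm hwv]) hvI
      have hvb : val s B (Agent.x v) (Item.ix v) ≤
          bval s B (Agent.x v) ((π Agent.I).erase (Item.ix w)) :=
        val_le_bval hpos hB0 _ hmem
      have hval : val s B (Agent.x v) (Item.ix v) = (s v : ℝ) := by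
        simp [val, endpoints, wt]
      have hbe : bval s B (Agent.x v) (π (Agent.x v)) = 0 := by
        rw [hxe]; simp [bval]
      have hsvr : (0:ℝ) < (s v : ℝ) := by exact_mod_cast hpos v
      rw [hbe] at hefx1
      rw [hval] at hvb
      linarith
    refine ⟨Iset, ?_⟩
    have hUB : ∑ v ∈ Iset ∪ Jset, s v ≤ 2 * B := by
      calc ∑ v ∈ Iset ∪ Jset, s v ≤ ∑ v : Fin T, s v :=
            Finset.sum_le_sum_of_subset_of_nonneg (Finset.subset_univ _)
              (fun i _ _ => (hpos i).le)
        _ = 2 * B := hsum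
    rw [Finset.sum_union hdisjIJ] at hUB
    omega
  · rintro ⟨I0, hI0⟩
    refine ⟨piB I0, ?_, ?_, ?_, ?_⟩
    · intro u w huw
      rw [Finset.disjoint_left]
      intro a h1 h2
      rw [mem_piB] at h1 h2
      exact huw (h1.trans h2.symm)
    · intro a
      exact ⟨ownerB I0 a, (mem_piB _ _ _).mpr rfl⟩
    · intro u a ha
      rw [mem_piB] at ha
      rw [ha]
      exact ownerB_endpoints I0 a
    · intro u w a ha
      rcases keyB hpos hsum hB hI0 u w with hcard | hle
      · have hsing : piB I0 w = {a} :=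
          Finset.eq_singleton_iff_unique_mem.mpr
            ⟨ha, fun b hb => Finset.card_le_one.mp hcard b hb a ha⟩
        rw [hsing, Finset.erase_singleton]
        have hbe : bval s B u (∅ : Finset (Item T)) = 0 := by simp [bval]
        exact le_trans (le_of_eq hbe) (bval_nonneg hpos hB0 u _)
      · exact le_trans (bval_mono hpos hB0 u (Finset.erase_subset _ _)) hle
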